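/- arXiv:math/0512418 — 6 statements merged into one kernel-verified Lean document; each statement's English description precedes it below -/
import Mathlib

section
/- The only integer solutions of y^4 + 2y^3 - 9x^2y^2 + 2xy - 15x - 7 = 0 are (x,y) = (-1,-4), (-1,-1), (-1,1), (-1,2). -/
/-!
Read `F(x, y) = 0` as a quadratic equation in `x`. Its discriminant
`D(y) = 36y⁶ + 72y⁵ - 248y² - 60y + 225` must then be a perfect square. With
`P = 6y³ + 6y² - 3y + 3` one has `D = P² - (293y² + 42y - 216)`, and for `y ≥ 24` or `y ≤ -26`
this lies strictly between `(|P| - 1)²` and `P²`, so it is no square (Runge's method).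
Among the remaining values of `y`, `D(y)` is a square only for `y ∈ {-9, -4, -1, 0, 1, 2}`,
and for each of these the quadratic equation in `x` is solved directly.
-/

theorem Int.not_isSquare_of_sq_lt_of_lt_sq {m n : ℤ} (h₁ : m ^ 2 < n) (h₂ : n < (m + 1) ^ 2) :
    ¬IsSquare n := by
  rintro ⟨r, rfl⟩
  rw [← sq, sq_lt_sq] at h₁ h₂
  have h₃ : |m + 1| ≤ |m| + 1 := by simpa only [abs_one] using abs_add_le m 1
  omega

def xDiscrim (y : ℤ) : ℤ := discrim (-9 * y ^ 2) (2 * y - 15) (y ^ 4 + 2 * y ^ 3 - 7)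

theorem xDiscrim_eq_sq_of_eq_zero {x y : ℤ}
    (h : y ^ 4 + 2 * y ^ 3 - 9 * x ^ 2 * y ^ 2 + 2 * x * y - 15 * x - 7 = 0) :
    xDiscrim y = (2 * (-9 * y ^ 2) * x + (2 * y - 15)) ^ 2 :=
  discrim_eq_sq_of_quadratic_eq_zero (by linear_combination h)

theorem mem_Icc_of_isSquare_xDiscrim {y : ℤ} (h : IsSquare (xDiscrim y)) :
    y ∈ Finset.Icc (-25) 23 := by
  set P := 6 * y ^ 3 + 6 * y ^ 2 - 3 * y + 3 with hP
  have hD : xDiscrim y = P ^ 2 - (293 * y ^ 2 + 42 * y - 216) := by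
    simp only [xDiscrim, discrim, P]; ring
  rw [hD] at h
  rw [Finset.mem_Icc]
  by_contra! hy
  obtain hy | hy : y ≤ -26 ∨ 24 ≤ y := by omega
  · have hcube : 0 ≤ (-y - 26) * y ^ 2 := mul_nonneg (by omega) (sq_nonneg y)
    exact Int.not_isSquare_of_sq_lt_of_lt_sq (m := -P - 1) (by nlinarith) (by nlinarith) h
  · have hcube : 0 ≤ (y - 24) * y ^ 2 := mul_nonneg (by omega) (sq_nonneg y)
    exact Int.not_isSquare_of_sq_lt_of_lt_sq (m := P - 1)
      (by nlinarith [sq_nonneg (7 * y - 24)]) (by nlinarith) h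

theorem mem_of_isSquare_xDiscrim :
    ∀ y ∈ Finset.Icc (-25 : ℤ) 23, IsSquare (xDiscrim y) → y ∈ ({-9, -4, -1, 0, 1, 2} : Finset ℤ) := by
  -- `Int.sqrt` is defined by well-founded recursion, which only the kernel unfolds.
  decide +kernel

theorem integer_solutions_example2 (x y : ℤ) :
    y^4 + 2*y^3 - 9*x^2*y^2 + 2*x*y - 15*x - 7 = 0 ↔
      (x, y) = (-1, -4) ∨ (x, y) = (-1, -1) ∨ (x, y) = (-1, 1) ∨ (x, y) = (-1, 2) := by
  constructor
  · intro h
    have hsq : IsSquare (xDiscrim y) := ⟨_, (xDiscrim_eq_sq_of_eq_zero h).trans (sq _)⟩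
    have hy := mem_of_isSquare_xDiscrim y (mem_Icc_of_isSquare_xDiscrim hsq) hsq
    simp only [Finset.mem_insert, Finset.mem_singleton] at hy
    rcases hy with rfl | rfl | rfl | rfl | rfl | rfl <;>
    · obtain ⟨hx₁, hx₂⟩ : -3 ≤ x ∧ x ≤ 3 := by constructor <;> nlinarith
      interval_cases x <;> simp_all
  · rintro (h | h | h | h) <;> obtain ⟨rfl, rfl⟩ := Prod.ext_iff.1 h <;> norm_num
end

section
/- The only integer solution of (y^2 - x^3)(y^2 - 2x^3) + 2x^5 - 9xy - 3 = 0 is (x,y) = (2,3). -/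
/-!
Runge's method. The leading form (y² - x³)(y² - 2x³) splits over ℚ, and with
A = y² - 2x³ + P, B = y² - x³ - P, P = 2x² + 4x + 16, one has F = A·B + 80x² + 128x + 253 - 9xy.
On a solution y² ≤ 2x³ + x + 1, so |A·B| = O(x^(5/2)), whereas B - A ≈ x³; hence for x ≥ 26 one of
|A|, |B| is at most 6. As A - 16 ≡ B + 16 ≡ y² and F(x, y) ≡ F(0, y) = y⁴ - 3 modulo x, this gives
x ∣ n² - 3 with 10 ≤ |n| ≤ 22. Modulo 27, F has zeros only for x ≡ 2, which leaves x = 83 among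
these divisors, and x = 83 is excluded modulo 5. Finally x = 2 forces y = 3, and F > 0 for x ≤ -2.
-/

namespace RungeExample

def F {R : Type*} [CommRing R] (x y : R) : R :=
  (y^2 - x^3) * (y^2 - 2*x^3) + 2*x^5 - 9*x*y - 3

theorem map_F {R S : Type*} [CommRing R] [CommRing S] (f : R →+* S) (x y : R) :
    f (F x y) = F (f x) (f y) := by
  simp [F, map_ofNat]

theorem F_intCast_eq_zero {n : ℕ} {x y : ℤ} (h : F x y = 0) :
    F (x : ZMod n) (y : ZMod n) = 0 := by
  have := congrArg (Int.castRingHom (ZMod n)) h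
  rwa [map_F, map_zero] at this

theorem modEq_two_of_F_eq_zero {x y : ℤ} (h : F x y = 0) : x ≡ 2 [ZMOD 27] := by
  have key : ∀ a b : ZMod 27, F a b = 0 → a = 2 := by decide
  exact (ZMod.intCast_eq_intCast_iff x 2 27).1 (by simpa using key _ _ (F_intCast_eq_zero h))

theorem F_eighty_three_ne_zero (y : ℤ) : F 83 y ≠ 0 := by
  have key : ∀ b : ZMod 5, F 83 b ≠ 0 := by decide
  exact fun h => key _ (by simpa using F_intCast_eq_zero (n := 5) h)

theorem eq_three_of_F_two_eq_zero {y : ℤ} (h : F 2 y = 0) : y = 3 := by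
  have hcubic : y^3 + 3*y^2 - 15*y - 63 ≠ 0 := by
    have key : ∀ b : ZMod 5, b^3 + 3*b^2 - 15*b - 63 ≠ 0 := by decide
    intro hc
    exact key y (by exact_mod_cast congrArg (Int.cast : ℤ → ZMod 5) hc)
  have hfactor : (y - 3) * (y^3 + 3*y^2 - 15*y - 63) = 0 := by
    unfold F at h
    linear_combination h
  exact sub_eq_zero.1 ((mul_eq_zero.1 hfactor).resolve_right hcubic)

theorem F_pos_of_le_neg_two {x y : ℤ} (hx : x ≤ -2) : 0 < F x y := by
  have hcross : 0 ≤ -x * y * (x^2 * y + 3) := by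
    rcases le_or_gt 0 y with hy | hy
    · exact mul_nonneg (mul_nonneg (by omega) hy) (by positivity)
    · exact mul_nonneg_of_nonpos_of_nonpos (by nlinarith) (by nlinarith)
  have htop : 32 ≤ x^5 * (x + 1) := by
    have h5 : (2:ℤ)^5 ≤ (-x)^5 := pow_le_pow_left₀ (by norm_num) (by omega) 5
    nlinarith
  unfold F
  nlinarith [pow_nonneg (sq_nonneg y) 2]

theorem sq_le_of_F_eq_zero {x y : ℤ} (hx : 2 ≤ x) (h : F x y = 0) : y^2 ≤ 2*x^3 + x + 1 := by
  by_contra! hy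
  have hs : x + 2 ≤ y^2 - 2*x^3 := by omega
  have hpoly : 0 < 8*x^5 - 4*x^4 + 8*x^3 - 81*x - 12 := by
    obtain ⟨t, ht, rfl⟩ : ∃ t : ℤ, 0 ≤ t ∧ x = t + 2 := ⟨x - 2, by omega, by ring⟩
    ring_nf; positivity
  unfold F at h
  -- `36xy ≤ x(4y² + 81)` and `(y² - 2x³)(y² - x³) ≥ (x + 2)(y² - x³)`
  nlinarith [mul_nonneg (sub_nonneg.2 hs) (by nlinarith : 0 ≤ y^2 - x^3),
    mul_nonneg (by omega : 0 ≤ x) (sq_nonneg (2*y - 9))]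

theorem le_abs_mul_of_le_abs {α : Type*} [CommRing α] [LinearOrder α] [IsStrictOrderedRing α]
    {a b k : α} (ha : k ≤ |a|) (hb : k ≤ |b|) : k * |a - b| - k^2 ≤ |a * b| := by
  rcases le_or_gt 0 k with hk | hk
  · rw [abs_mul]
    nlinarith [mul_nonneg (sub_nonneg.2 ha) (sub_nonneg.2 hb),
      mul_le_mul_of_nonneg_left (abs_sub a b) hk]
  · nlinarith [mul_nonneg (neg_nonneg.2 hk.le) (abs_nonneg (a - b)), abs_nonneg (a * b)]

/-- `P = 2x² + 4x + 16` is chosen so that `P x³ - P²` agrees with `2x⁵` in degrees 5, 4 and 3. -/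
theorem F_eq_mul_add {R : Type*} [CommRing R] (x y : R) :
    F x y = (y^2 - 2*x^3 + (2*x^2 + 4*x + 16)) * (y^2 - x^3 - (2*x^2 + 4*x + 16))
      + (80*x^2 + 128*x + 253 - 9*x*y) := by
  unfold F
  ring

theorem abs_le_six_of_F_eq_zero {x y : ℤ} (hx : 26 ≤ x) (h : F x y = 0) :
    |y^2 - 2*x^3 + (2*x^2 + 4*x + 16)| ≤ 6 ∨ |y^2 - x^3 - (2*x^2 + 4*x + 16)| ≤ 6 := by
  have hy := sq_le_of_F_eq_zero (by omega) h
  rw [F_eq_mul_add] at h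
  set A := y^2 - 2*x^3 + (2*x^2 + 4*x + 16) with hA
  set B := y^2 - x^3 - (2*x^2 + 4*x + 16) with hB
  by_contra! hAB
  have hprod : A * B = 9*x*y - (80*x^2 + 128*x + 253) := by linear_combination h
  have hdiff : |A - B| = x^3 - 4*x^2 - 8*x - 32 := by
    rw [abs_sub_comm, abs_of_pos] <;> rw [hA, hB]
    · ring
    · nlinarith
  have hlow := le_abs_mul_of_le_abs (k := 7) (a := A) (b := B) (by omega) (by omega)
  rw [hprod, hdiff] at hlow
  have hL : 0 ≤ 7*x^3 - 108*x^2 - 184*x - 526 := by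
    obtain ⟨t, ht, rfl⟩ : ∃ t : ℤ, 0 ≤ t ∧ x = t + 26 := ⟨x - 26, by omega, by ring⟩
    ring_nf; positivity
  have hgap : 81*x^2*(2*x^3 + x + 1) < (7*x^3 - 108*x^2 - 184*x - 526)^2 := by
    obtain ⟨t, ht, rfl⟩ : ∃ t : ℤ, 0 ≤ t ∧ x = t + 26 := ⟨x - 26, by omega, by ring⟩
    rw [← sub_pos]; ring_nf; positivity
  have hlin : 7*x^3 - 108*x^2 - 184*x - 526 ≤ |9*x*y| := by
    have := abs_sub (9*x*y) (80*x^2 + 128*x + 253)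
    rw [abs_of_pos (by positivity : (0:ℤ) < 80*x^2 + 128*x + 253)] at this
    linarith
  have hsq : (7*x^3 - 108*x^2 - 184*x - 526)^2 ≤ (9*x*y)^2 := by
    rw [← sq_abs (9*x*y)]
    exact pow_le_pow_left₀ hL hlin 2
  nlinarith [mul_le_mul_of_nonneg_left hy (by positivity : (0:ℤ) ≤ 81*x^2)]

theorem dvd_sq_sub_three_of_dvd_sub_sq {x y n : ℤ} (h : F x y = 0) (hn : x ∣ n - y^2) :
    x ∣ n^2 - 3 := by
  have hquartic : x ∣ y^4 - 3 :=
    ⟨3*x^2*y^2 - 2*x^5 - 2*x^4 + 9*y, by unfold F at h; linear_combination h⟩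
  have : n^2 - 3 = (y^4 - 3) + (n - y^2) * (n + y^2) := by ring
  rw [this]
  exact dvd_add hquartic (dvd_mul_of_dvd_left hn _)

theorem exists_dvd_sq_sub_three {x y : ℤ} (hx : 26 ≤ x) (h : F x y = 0) :
    ∃ n : ℤ, 10 ≤ |n| ∧ |n| ≤ 22 ∧ x ∣ n^2 - 3 := by
  rcases abs_le_six_of_F_eq_zero hx h with hA | hB
  · obtain ⟨hA, hA'⟩ := abs_le.1 hA
    refine ⟨y^2 - 2*x^3 + 2*x^2 + 4*x, ?_, ?_, ?_⟩
    · rw [abs_of_neg (by linarith)]; linarith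
    · rw [abs_of_neg (by linarith)]; linarith
    · exact dvd_sq_sub_three_of_dvd_sub_sq h ⟨-2*x^2 + 2*x + 4, by ring⟩
  · obtain ⟨hB, hB'⟩ := abs_le.1 hB
    refine ⟨y^2 - x^3 - 2*x^2 - 4*x, ?_, ?_, ?_⟩
    · rw [abs_of_pos (by linarith)]; linarith
    · rw [abs_of_pos (by linarith)]; linarith
    · exact dvd_sq_sub_three_of_dvd_sub_sq h ⟨-x^2 - 2*x - 4, by ring⟩

theorem eq_eighty_three_of_dvd_sq_sub_three {x n : ℤ} (hx : x ≡ 2 [ZMOD 27]) (hx26 : 26 ≤ x)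
    (hn : 10 ≤ |n|) (hn' : |n| ≤ 22) (hdvd : x ∣ n^2 - 3) : x = 83 := by
  have key : ∀ k < 18, ∀ m < 23, 1 ≤ k → 10 ≤ m → 27 * k + 2 ∣ m^2 - 3 → k = 3 := by decide
  obtain ⟨k, rfl⟩ : ∃ k : ℕ, x = 27 * k + 2 := ⟨(x / 27).toNat, by rw [Int.ModEq] at hx; omega⟩
  obtain ⟨m, hm⟩ : ∃ m : ℕ, |n| = m := ⟨n.natAbs, Int.abs_eq_natAbs n⟩
  rw [← sq_abs, hm] at hdvd
  rw [hm] at hn hn'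
  have hm100 : 100 ≤ m^2 := by nlinarith
  have hdvd' : 27 * k + 2 ∣ m^2 - 3 := by
    rw [← Int.natCast_dvd_natCast]
    push_cast [(by omega : 3 ≤ m^2)]
    exact hdvd
  have hle := Nat.le_of_dvd (by omega) hdvd'
  have hm22 : m^2 ≤ 22^2 := Nat.pow_le_pow_left (by omega) 2
  have := key k (by omega) m (by omega) (by omega) (by omega) hdvd'
  omega

end RungeExample

open RungeExample

theorem integer_solutions_example3 (x y : ℤ) :
    (y^2 - x^3) * (y^2 - 2*x^3) + 2*x^5 - 9*x*y - 3 = 0 ↔ (x, y) = (2, 3) := by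
  constructor
  · intro h
    change F x y = 0 at h
    have h27 := modEq_two_of_F_eq_zero h
    rcases (by rw [Int.ModEq] at h27; omega : x ≤ -2 ∨ x = 2 ∨ 26 ≤ x) with hx | rfl | hx
    · exact absurd h (F_pos_of_le_neg_two hx).ne'
    · rw [eq_three_of_F_two_eq_zero h]
    · obtain ⟨n, hn, hn', hdvd⟩ := exists_dvd_sq_sub_three hx h
      obtain rfl := eq_eighty_three_of_dvd_sq_sub_three h27 hx hn hn' hdvd
      exact absurd h (F_eighty_three_ne_zero y)
  · rintro ⟨⟩
    norm_num
end

section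
/- There are no integers x, y satisfying simultaneously 2y(y^2 - 2x^2) + 2x^2 - 3y^2 + 8 = 0 and y^6 - 2y^5 - 4x^4y^2 + 17x^2y + 4x - 18 = 0. -/
/-!
Modulo 2, `P₁ ≡ y²`, so `y` is even; then modulo 4, `P₁ ≡ 2x²`, so `x` is even. With `x` and `y`
both even, every term of `F` except `-18` is divisible by 4, so `F ≡ 2 (mod 4)`.
-/

lemma even_y_of_P1_eq_zero {x y : ℤ} (h : 2*y*(y^2 - 2*x^2) + 2*x^2 - 3*y^2 + 8 = 0) :
    Even y := by
  have hsq : Even (y^2) := ⟨y*(y^2 - 2*x^2) + x^2 - y^2 + 4, by linear_combination -h⟩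
  exact (Int.even_pow.mp hsq).1

lemma even_x_of_P1_eq_zero {x y : ℤ} (h : 2*y*(y^2 - 2*x^2) + 2*x^2 - 3*y^2 + 8 = 0)
    (hy : Even y) : Even x := by
  obtain ⟨k, rfl⟩ := hy
  set r := -k*(4*k^2 - 2*x^2) + 3*k^2 - 2
  have h2 : 2 * x^2 = 2 * (r + r) := by linear_combination h
  have hsq : Even (x^2) := ⟨r, mul_left_cancel₀ two_ne_zero h2⟩
  exact (Int.even_pow.mp hsq).1

lemma F_ne_zero_of_even {x y : ℤ} (hx : Even x) (hy : Even y) :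
    y^6 - 2*y^5 - 4*x^4*y^2 + 17*x^2*y + 4*x - 18 ≠ 0 := by
  obtain ⟨m, rfl⟩ := hx
  obtain ⟨k, rfl⟩ := hy
  intro h
  have h4 : (4 : ℤ) ∣ 18 :=
    ⟨16*k^6 - 16*k^5 - 64*m^4*k^2 + 34*m^2*k + 2*m, by linear_combination -h⟩
  norm_num at h4

theorem no_common_solution_F_P1_example1 :
    ¬ ∃ x y : ℤ, 2*y*(y^2 - 2*x^2) + 2*x^2 - 3*y^2 + 8 = 0 ∧
      y^6 - 2*y^5 - 4*x^4*y^2 + 17*x^2*y + 4*x - 18 = 0 := by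
  rintro ⟨x, y, hP, hF⟩
  have hy := even_y_of_P1_eq_zero hP
  exact F_ne_zero_of_even (even_x_of_P1_eq_zero hP hy) hy hF
end

section
/- For each k ∈ {0, 1, 2}, there are no integers x, y with 2y^3 + 15y^2 = k and y^4 + 2y^3 - 9x^2y^2 + 2xy - 15x - 7 = 0. -/
/-! The cubic 2y³ + 15y² = y²(2y + 15) takes no value in {0, 1, 2} at a nonzero integer
(its smallest positive value is 13, at y = -1), so y = 0, and then F = -15x - 7 has no
integer root. -/

theorem eq_zero_of_two_mul_cube_add_fifteen_mul_sq_nonneg_of_le_two {y : ℤ}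
    (h0 : 0 ≤ 2 * y ^ 3 + 15 * y ^ 2) (h2 : 2 * y ^ 3 + 15 * y ^ 2 ≤ 2) : y = 0 := by
  have hlt : -8 < y := by nlinarith [sq_nonneg y]
  have hle : y ≤ 0 := by nlinarith [sq_nonneg y]
  interval_cases y <;> first | rfl | norm_num at h2

theorem no_common_solution_F_P3_example2 (k : ℤ) (hk : k = 0 ∨ k = 1 ∨ k = 2) :
    ¬ ∃ x y : ℤ, 2*y^3 + 15*y^2 = k ∧
      y^4 + 2*y^3 - 9*x^2*y^2 + 2*x*y - 15*x - 7 = 0 := by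
  rintro ⟨x, y, hP, hF⟩
  obtain rfl : y = 0 := eq_zero_of_two_mul_cube_add_fifteen_mul_sq_nonneg_of_le_two (by omega) (by omega)
  omega
end

section
/- For each integer k with 0 ≤ k ≤ 4, the system x^3 - y^2 + 2x^2 + 4x + 16 + k = 0 and (y^2 - x^3)(y^2 - 2x^3) + 2x^5 - 9xy - 3 = 0 has no integer solutions. -/
/-!
Modulo 9, the curve `F = 0` only has points with `x ≡ 2` and `3 ∣ y`, where `P₁ ≡ 4`.
Hence a common integer zero of `F` and `P₁ + k` forces `k ≡ 5 [ZMOD 9]`.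
-/

theorem eq_two_and_sq_eq_zero_of_F_eq_zero_zmod9 (a b : ZMod 9)
    (h : (b^2 - a^3) * (b^2 - 2*a^3) + 2*a^5 - 3 = 0) : a = 2 ∧ b^2 = 0 := by
  revert a b
  decide

theorem P₁_modEq_four_of_F_eq_zero {x y : ℤ}
    (h : (y^2 - x^3) * (y^2 - 2*x^3) + 2*x^5 - 9*x*y - 3 = 0) :
    x^3 - y^2 + 2*x^2 + 4*x + 16 ≡ 4 [ZMOD 9] := by
  have h_nine : (9 : ZMod 9) = 0 := rfl
  have h9 : ((y : ZMod 9)^2 - (x : ZMod 9)^3) * ((y : ZMod 9)^2 - 2*(x : ZMod 9)^3)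
      + 2*(x : ZMod 9)^5 - 3 = 0 := by
    simpa [h_nine] using congrArg (Int.cast : ℤ → ZMod 9) h
  obtain ⟨hx, hy⟩ := eq_two_and_sq_eq_zero_of_F_eq_zero_zmod9 _ _ h9
  refine (ZMod.intCast_eq_intCast_iff _ _ 9).mp ?_
  push_cast
  rw [hx, hy]
  decide

theorem no_common_solution_F_P1_example3 (k : ℤ) (hk0 : 0 ≤ k) (hk4 : k ≤ 4) :
    ¬ ∃ x y : ℤ, x^3 - y^2 + 2*x^2 + 4*x + 16 + k = 0 ∧
      (y^2 - x^3) * (y^2 - 2*x^3) + 2*x^5 - 9*x*y - 3 = 0 := by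
  rintro ⟨x, y, hP, hF⟩
  have hmod := P₁_modEq_four_of_F_eq_zero hF
  rw [show x^3 - y^2 + 2*x^2 + 4*x + 16 = -k by linarith, Int.ModEq] at hmod
  omega
end

section
/- For each integer k with 0 ≤ k ≤ 4, the system y^2 - 2x^3 + 2x^2 + 4x + 16 + k = 0 and (y^2 - x^3)(y^2 - 2x^3) + 2x^5 - 9xy - 3 = 0 has no integer solutions. -/
/-!
Reduce modulo 2 and modulo 3. Modulo 2 the function `F` is `y + 1` and `P₂` is `y`, so a common
zero of `F` and `P₂ + k` forces `k` to be odd. Modulo 3, by Fermat's little theorem, `P₂ - F` is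
the constant `1`, so a common zero forces `k ≡ 2 [ZMOD 3]`. Hence `k ≡ 5 [ZMOD 6]`, which rules
out `0 ≤ k ≤ 4`.
-/

section

variable {R : Type*} [CommRing R]

def F (x y : R) : R := (y^2 - x^3) * (y^2 - 2*x^3) + 2*x^5 - 9*x*y - 3

def P₂ (x y : R) : R := y^2 - 2*x^3 + 2*x^2 + 4*x + 16

theorem Int.cast_F (x y : ℤ) : ((F x y : ℤ) : R) = F (x : R) (y : R) := by
  simp only [F]; push_cast; rfl

theorem Int.cast_P₂ (x y : ℤ) : ((P₂ x y : ℤ) : R) = P₂ (x : R) (y : R) := by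
  simp only [P₂]; push_cast; rfl

end

theorem F_zmod_two (a b : ZMod 2) : F a b = b + 1 := by
  revert a b; decide

theorem P₂_zmod_two (a b : ZMod 2) : P₂ a b = b := by
  revert a b; decide

theorem P₂_sub_F_zmod_three (a b : ZMod 3) : P₂ a b - F a b = 1 := by
  revert a b; decide

variable {x y k : ℤ}

theorem two_dvd_sub_one_of_common_zero (hP : P₂ x y + k = 0) (hF : F x y = 0) : 2 ∣ k - 1 := by
  have hP₂ : (y : ZMod 2) + k = 0 := by
    simpa only [Int.cast_add, Int.cast_P₂, P₂_zmod_two, Int.cast_zero] using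
      congrArg (Int.cast : ℤ → ZMod 2) hP
  have hF₂ : (y : ZMod 2) + 1 = 0 := by
    simpa only [Int.cast_F, F_zmod_two, Int.cast_zero] using congrArg (Int.cast : ℤ → ZMod 2) hF
  refine (ZMod.intCast_zmod_eq_zero_iff_dvd (k - 1) 2).1 ?_
  push_cast
  linear_combination hP₂ - hF₂

theorem three_dvd_add_one_of_common_zero (hP : P₂ x y + k = 0) (hF : F x y = 0) :
    3 ∣ k + 1 := by
  have h := congrArg (Int.cast : ℤ → ZMod 3) (congrArg₂ (· - ·) hP hF)
  rw [add_sub_right_comm, Int.cast_add, Int.cast_sub, Int.cast_P₂, Int.cast_F,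
    P₂_sub_F_zmod_three, sub_zero, Int.cast_zero, add_comm] at h
  exact (ZMod.intCast_zmod_eq_zero_iff_dvd (k + 1) 3).1 (by push_cast; exact h)

theorem no_common_solution_F_P2_example3 (k : ℤ) (hk0 : 0 ≤ k) (hk4 : k ≤ 4) :
    ¬ ∃ x y : ℤ, y^2 - 2*x^3 + 2*x^2 + 4*x + 16 + k = 0 ∧
      (y^2 - x^3) * (y^2 - 2*x^3) + 2*x^5 - 9*x*y - 3 = 0 := by
  rintro ⟨x, y, hP, hF⟩
  have h₂ : 2 ∣ k - 1 := two_dvd_sub_one_of_common_zero (x := x) (y := y) hP hF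
  have h₃ : 3 ∣ k + 1 := three_dvd_add_one_of_common_zero (x := x) (y := y) hP hF
  omega
end
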